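/- (Proposition 4) Let Γ be a finite nonempty set and Δ : Γ → Γ → ℤ a symmetric matrix with det Δ ≠ 0. Then the map sending ψ ∈ ker(Δ⊗(ℝ/ℤ)) to the homomorphism Q(−,ψ) : G(Γ) → ℝ/ℤ, [f] ↦ Σ_{v∈Γ} f(v)·ψ(v), is well defined (the value is independent of the representative f of the class in G(Γ) = ℤ^Γ/Δ(ℤ^Γ)) and is a group isomorphism from ker(Δ⊗(ℝ/ℤ)) onto the Pontryagin dual Hom(G(Γ), ℝ/ℤ). In particular the sandpile group of a finite graph is canonically self-dual. -/

import Mathlib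

/-!
Write `⟨f, ψ⟩ = Σ_v f(v) • ψ(v)` for `f : Γ → ℤ` and `ψ : Γ → A`. This pairing identifies `A^Γ`
with `Hom(ℤ^Γ, A)`, since `ℤ^Γ` is free on the indicator functions, and `Δ` is adjoint to `Δᵀ`
for it. A character of `G(Γ) = ℤ^Γ / Δ(ℤ^Γ)` is a character of `ℤ^Γ` vanishing on `Δ(ℤ^Γ)`, so
it is `⟨-, ψ⟩` for a unique `ψ` with `⟨Δ f, ψ⟩ = ⟨f, Δᵀ ψ⟩ = 0` for all `f`, i.e. `Δᵀ ψ = 0`.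
For symmetric `Δ` these are the `ℝ/ℤ`-valued functions in `ker(Δ ⊗ ℝ/ℤ)`.
-/

open scoped BigOperators

/-- The homomorphism `Δ ⊗ A : A^Γ → A^Γ` induced by an integer matrix `Δ`. -/
def lapHom {Γ : Type} [Fintype Γ] (Δ : Matrix Γ Γ ℤ) (A : Type) [AddCommGroup A] :
    (Γ → A) →+ (Γ → A) where
  toFun f v := ∑ w, Δ v w • f w
  map_zero' := by funext v; simp
  map_add' f g := by funext v; simp [smul_add, Finset.sum_add_distrib]

open scoped Matrix

section Pairing

variable {Γ : Type} [Fintype Γ] {A : Type} [AddCommGroup A]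

theorem AddMonoidHom.apply_eq_sum_smul_single [DecidableEq Γ] (χ : (Γ → ℤ) →+ A)
    (f : Γ → ℤ) : χ f = ∑ v, f v • χ (Pi.single v 1) := by
  rw [← χ.coe_toIntLinearMap, χ.toIntLinearMap.pi_apply_eq_sum_univ f]
  congr! with v _ w
  simp [Pi.single_apply, eq_comm]

theorem eq_of_forall_sum_smul_eq {φ ψ : Γ → A}
    (h : ∀ f : Γ → ℤ, ∑ v, f v • φ v = ∑ v, f v • ψ v) : φ = ψ := by
  classical
  funext v
  simpa [Pi.single_apply] using h (Pi.single v 1)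

theorem sum_lapHom_smul (Δ : Matrix Γ Γ ℤ) (f : Γ → ℤ) (ψ : Γ → A) :
    ∑ v, lapHom Δ ℤ f v • ψ v = ∑ w, f w • lapHom Δᵀ A ψ w := by
  simp only [lapHom, AddMonoidHom.coe_mk, ZeroHom.coe_mk, smul_eq_mul, Finset.sum_smul,
    Finset.smul_sum, mul_smul, Matrix.transpose_apply]
  rw [Finset.sum_comm]
  exact Finset.sum_congr rfl fun w _ => Finset.sum_congr rfl fun v _ => smul_comm _ _ _

theorem mem_ker_lapHom_transpose_iff (Δ : Matrix Γ Γ ℤ) (ψ : Γ → A) :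
    ψ ∈ (lapHom Δᵀ A).ker ↔ ∀ f : Γ → ℤ, ∑ v, lapHom Δ ℤ f v • ψ v = 0 := by
  simp only [sum_lapHom_smul, AddMonoidHom.mem_ker]
  constructor
  · intro hψ f
    simp [hψ]
  · intro hψ
    exact eq_of_forall_sum_smul_eq fun f => by simp [hψ]

theorem sum_smul_eq_of_mk_eq {Δ : Matrix Γ Γ ℤ} {ψ : Γ → A} (hψ : ψ ∈ (lapHom Δᵀ A).ker)
    {f g : Γ → ℤ}
    (hfg : (QuotientAddGroup.mk f : (Γ → ℤ) ⧸ (lapHom Δ ℤ).range) = QuotientAddGroup.mk g) :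
    ∑ v, f v • ψ v = ∑ v, g v • ψ v := by
  obtain ⟨h, hh⟩ := QuotientAddGroup.eq.mp hfg
  have hzero := (mem_ker_lapHom_transpose_iff Δ ψ).mp hψ h
  rw [hh] at hzero
  simpa [add_smul, Finset.sum_add_distrib, neg_add_eq_zero] using hzero

theorem exists_mem_ker_lapHom_transpose_of_quotient_hom (Δ : Matrix Γ Γ ℤ)
    (χ : (Γ → ℤ) ⧸ (lapHom Δ ℤ).range →+ A) :
    ∃ ψ ∈ (lapHom Δᵀ A).ker, ∀ f : Γ → ℤ,
      χ (QuotientAddGroup.mk f) = ∑ v, f v • ψ v := by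
  classical
  set χ' := χ.comp (QuotientAddGroup.mk' (lapHom Δ ℤ).range)
  have hχ' (f : Γ → ℤ) : χ (QuotientAddGroup.mk f) = ∑ v, f v • χ' (Pi.single v 1) :=
    χ'.apply_eq_sum_smul_single f
  refine ⟨fun v => χ' (Pi.single v 1), (mem_ker_lapHom_transpose_iff Δ _).mpr fun f => ?_, hχ'⟩
  rw [← hχ', (QuotientAddGroup.eq_zero_iff _).mpr (AddMonoidHom.mem_range.mpr ⟨f, rfl⟩), map_zero]

end Pairing

theorem sandpile_group_canonically_self_dual
    (Γ : Type) [Fintype Γ]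
    (Δ : Matrix Γ Γ ℤ) (hsym : Δ.IsSymm) :
    -- well defined: the pairing only depends on the class of `f` in `G(Γ)`
    (∀ ψ ∈ (lapHom Δ (AddCircle (1 : ℝ))).ker, ∀ f g : Γ → ℤ,
      (QuotientAddGroup.mk f : (Γ → ℤ) ⧸ (lapHom Δ ℤ).range) = QuotientAddGroup.mk g →
      ∑ v, f v • ψ v = ∑ v, g v • ψ v) ∧
    -- the assignment `ψ ↦ Q(−, ψ)` is additive
    (∀ ψ₁ ψ₂ : Γ → AddCircle (1 : ℝ), ∀ f : Γ → ℤ,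
      ∑ v, f v • (ψ₁ + ψ₂) v = ∑ v, f v • ψ₁ v + ∑ v, f v • ψ₂ v) ∧
    -- injective
    (∀ ψ₁ ∈ (lapHom Δ (AddCircle (1 : ℝ))).ker,
     ∀ ψ₂ ∈ (lapHom Δ (AddCircle (1 : ℝ))).ker,
      (∀ f : Γ → ℤ, ∑ v, f v • ψ₁ v = ∑ v, f v • ψ₂ v) → ψ₁ = ψ₂) ∧
    -- surjective onto the Pontryagin dual `Hom(G(Γ), ℝ/ℤ)`
    (∀ χ : ((Γ → ℤ) ⧸ (lapHom Δ ℤ).range) →+ AddCircle (1 : ℝ),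
      ∃ ψ ∈ (lapHom Δ (AddCircle (1 : ℝ))).ker, ∀ f : Γ → ℤ,
        χ (QuotientAddGroup.mk f) = ∑ v, f v • ψ v) := by
  have hker : (lapHom Δ (AddCircle (1 : ℝ))).ker = (lapHom Δᵀ (AddCircle (1 : ℝ))).ker := by
    rw [hsym.eq]
  refine ⟨fun ψ hψ f g => sum_smul_eq_of_mk_eq (hker ▸ hψ), ?_,
    fun ψ₁ _ ψ₂ _ => eq_of_forall_sum_smul_eq, fun χ => ?_⟩
  · intro ψ₁ ψ₂ f
    simp only [Pi.add_apply, smul_add, Finset.sum_add_distrib]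
  · rw [hker]
    exact exists_mem_ker_lapHom_transpose_of_quotient_hom Δ χ
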